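/- Let α ∈ ℝ, let m, M be natural numbers with m ≥ 1, let Ψ ∈ [−π, π), ε > 0, and let L be a function holomorphic on the sector S(Ψ, ε) := {r e^{iθ} : r > 0, θ ∈ (Ψ−ε, Ψ+ε)} that admits an asymptotic expansion to all orders: there are coefficients d_{j,k} ∈ ℂ (j ∈ ℕ, 0 ≤ k ≤ M) such that for every N ∈ ℕ, L(z) − ∑_{j=0}^N ∑_{k=0}^M d_{j,k}·z^{α−j/m}·(log z)^k = o(|z|^{α−N/m}) as |z| → ∞ in S(Ψ, ε), where log z is the branch with imaginary part in (Ψ−ε, Ψ+ε) and z^β := exp(β·log z). Let c ∈ ℂ, let 0 < ε′ < ε, and suppose R₀ > 0 is such that z − c ∈ S(Ψ, ε) whenever z ∈ S(Ψ, ε′) and |z| ≥ R₀. Then there exist coefficients Ω_{j,k} ∈ ℂ (j ∈ ℕ, 0 ≤ k ≤ M) such that for every N ∈ ℕ, L(z − c) − ∑_{j=0}^N ∑_{k=0}^M Ω_{j,k}·z^{α−j/m}·(log z)^k = o(|z|^{α−N/m}) as |z| → ∞ in S(Ψ, ε′). Moreover Ω_{0,k} = d_{0,k} for every k ∈ {0,…,M}.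 -/

import Mathlib

open Complex Filter Set MeasureTheory Asymptotics

noncomputable section

/-- Branch of the logarithm with imaginary part in `(Ψ - 2π, Ψ]`. -/
def logPsi (Ψ : ℝ) (w : ℂ) : ℂ :=
  Complex.log (w * Complex.exp (-((Ψ - Real.pi : ℝ) : ℂ) * Complex.I)) +
    ((Ψ - Real.pi : ℝ) : ℂ) * Complex.I

/-- `w ^ s` with branch cut along the ray of angle `Ψ`. -/
def cpowPsi (Ψ : ℝ) (w s : ℂ) : ℂ := Complex.exp (s * logPsi Ψ w)

/-- The open sector of half-opening `ε` around the ray of angle `Ψ` (arguments mod 2π). -/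
def sector (Ψ ε : ℝ) : Set ℂ :=
  {z | ∃ r θ : ℝ, 0 < r ∧ θ ∈ Set.Ioo (Ψ - ε) (Ψ + ε) ∧
    z = (r : ℂ) * Complex.exp ((θ : ℂ) * Complex.I)}

/-- Branch of the logarithm holomorphic on the sector around the angle `Ψ`,
with imaginary part in `(Ψ - π, Ψ + π]`. -/
def logSector (Ψ : ℝ) (z : ℂ) : ℂ :=
  Complex.log (z * Complex.exp (-(Ψ : ℂ) * Complex.I)) + (Ψ : ℂ) * Complex.I

/-- `z ^ β` using the sector branch of the logarithm. -/
def cpowSector (Ψ : ℝ) (z β : ℂ) : ℂ := Complex.exp (β * logSector Ψ z)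

/-- The filter `|z| → ∞` within the sector. -/
def atInfSector (Ψ ε : ℝ) : Filter ℂ :=
  Filter.comap (fun z : ℂ => ‖z‖) Filter.atTop ⊓ Filter.principal (sector Ψ ε)

/-- A sequence (indexed from 1) is admissible with exponent of convergence `α`. -/
structure Admissible (a : ℕ → ℂ) (α : ℝ) : Prop where
  abs_pos : 0 < ‖a 1‖
  abs_mono : ∀ n, 1 ≤ n → ‖a n‖ ≤ ‖a (n + 1)‖
  abs_tendsto : Filter.Tendsto (fun n => ‖a n‖) Filter.atTop Filter.atTop
  exponent : Filter.limsup
      (fun n : ℕ => ((Real.log n / Real.log ‖a n‖ : ℝ) : EReal))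
      Filter.atTop = (α : EReal)

/-- The `n`-th factor in a Hadamard product of genus `k - 1`. -/
def hadamardFactor (k : ℕ) (w : ℂ) : ℂ :=
  (1 - w) * Complex.exp (∑ j ∈ Finset.Icc 1 (k - 1), (1 / (j : ℂ)) * w ^ j)

end

/-!
Write `z - c = z (1 - c/z)`. Away from the cut of the logarithm,
`log (z - c) = log z + log (1 - c/z)`, so each term `(z - c)^β (log (z - c))^k` of the expansion
of `L` at `z - c` becomes `z^β` times a polynomial in `log z` whose coefficients are analytic
functions of `c/z`. Expanding them in powers of `c/z` only produces the exponents
`β - t = α - (j + t m)/m`, and the `t = 0` terms give back the original coefficients, whence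
`Ω 0 k = d 0 k`.

If `ε' ≥ π` the two logarithms may differ by `2πi n`. Then `ε > π`, `L` is continuous across the
cut, and comparing the expansion on both sides of it (expansions in the scale `e^{βx} x^k` are
unique) shows that every block `∑_k d j k e^{β u} u^k` is `2πi`-periodic in `u = log z`, so the
discrepancy does not matter.
-/

open scoped Real

section Sector

variable {Ψ ε : ℝ}

lemma logSector_exp {u : ℂ} (h₁ : Ψ - π < u.im) (h₂ : u.im ≤ Ψ + π) :
    logSector Ψ (exp u) = u := by
  rw [logSector, ← Complex.exp_add, Complex.log_exp] <;> simp <;> linarith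

lemma exp_logSector {z : ℂ} (hz : z ≠ 0) : exp (logSector Ψ z) = z := by
  rw [logSector, Complex.exp_add, Complex.exp_log (mul_ne_zero hz (Complex.exp_ne_zero _)),
    mul_assoc, ← Complex.exp_add]
  simp

lemma sector_eq_image_exp : sector Ψ ε = exp '' {u : ℂ | u.im ∈ Ioo (Ψ - ε) (Ψ + ε)} := by
  ext z
  constructor
  · rintro ⟨r, θ, hr, hθ, rfl⟩
    refine ⟨Real.log r + θ * I, by simpa using hθ, ?_⟩
    rw [Complex.exp_add, ← Complex.ofReal_exp, Real.exp_log hr]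
  · rintro ⟨u, hu, rfl⟩
    refine ⟨Real.exp u.re, u.im, Real.exp_pos _, hu, ?_⟩
    rw [Complex.ofReal_exp, ← Complex.exp_add, Complex.re_add_im]

lemma isOpen_sector : IsOpen (sector Ψ ε) := by
  rw [sector_eq_image_exp]
  exact Complex.isOpenMap_exp _ (isOpen_Ioo.preimage Complex.continuous_im)

lemma exp_mem_sector {u : ℂ} (hu : u.im ∈ Ioo (Ψ - ε) (Ψ + ε)) : exp u ∈ sector Ψ ε := by
  rw [sector_eq_image_exp]
  exact ⟨u, hu, rfl⟩

lemma norm_cpowSector (b : ℝ) {z : ℂ} (hz : z ≠ 0) : ‖cpowSector Ψ z b‖ = ‖z‖ ^ b := by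
  rw [cpowSector, Complex.norm_exp, Complex.re_ofReal_mul, logSector, Complex.add_re,
    Complex.log_re, norm_mul, Complex.norm_exp, Real.rpow_def_of_pos (norm_pos_iff.2 hz)]
  simp [mul_comm]

lemma cpowSector_mul_div_pow {z : ℂ} (hz : z ≠ 0) (β c : ℂ) (t : ℕ) :
    cpowSector Ψ z β * (c / z) ^ t = c ^ t * cpowSector Ψ z (β - t) := by
  have hinv : z⁻¹ = exp (-logSector Ψ z) := by rw [Complex.exp_neg, exp_logSector hz]
  rw [cpowSector, cpowSector, div_eq_mul_inv, mul_pow, hinv, ← Complex.exp_nat_mul, sub_mul,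
    sub_eq_add_neg, Complex.exp_add]
  ring_nf

lemma norm_logSector_le (z : ℂ) : ‖logSector Ψ z‖ ≤ |Real.log ‖z‖| + (π + |Ψ|) := by
  refine (Complex.norm_le_abs_re_add_abs_im _).trans (add_le_add ?_ ?_)
  · rw [logSector, Complex.add_re, Complex.log_re, norm_mul, Complex.norm_exp]
    simp
  · simp only [logSector, Complex.add_im, Complex.log_im, Complex.mul_im, Complex.ofReal_re,
      Complex.I_im, Complex.ofReal_im, Complex.I_re, mul_zero, add_zero, mul_one]
    exact (abs_add_le _ _).trans (add_le_add_left (Complex.abs_arg_le_pi _) _)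

end Sector

section Asymptotics

open scoped Topology

variable {l : Filter ℂ}

lemma tendsto_norm_atInfSector (Ψ ε : ℝ) : Tendsto (‖·‖) (atInfSector Ψ ε) atTop :=
  tendsto_comap.mono_left inf_le_left

lemma eventually_atInfSector_iff {Ψ ε : ℝ} {p : ℂ → Prop} :
    (∀ᶠ z in atInfSector Ψ ε, p z) ↔ ∃ R, ∀ z ∈ sector Ψ ε, R ≤ ‖z‖ → p z := by
  rw [atInfSector, eventually_inf_principal, eventually_comap, eventually_atTop]
  constructor
  · rintro ⟨R, hR⟩
    exact ⟨R, fun z hz hRz => hR _ hRz z rfl hz⟩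
  · rintro ⟨R, hR⟩
    exact ⟨R, fun r hr z hzr hz => hR z hz (hzr ▸ hr)⟩

lemma tendsto_sub_atInfSector {Ψ ε ε' R₀ : ℝ} {c : ℂ}
    (hshift : ∀ z ∈ sector Ψ ε', R₀ ≤ ‖z‖ → z - c ∈ sector Ψ ε) :
    Tendsto (· - c) (atInfSector Ψ ε') (atInfSector Ψ ε) := by
  have hl := tendsto_norm_atInfSector Ψ ε'
  refine tendsto_inf.2 ⟨tendsto_comap_iff.2 ?_, tendsto_principal.2 ?_⟩
  · refine tendsto_atTop_mono (fun z => ?_) (tendsto_atTop_add_const_right _ (-‖c‖) hl)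
    simpa [← sub_eq_add_neg] using norm_sub_norm_le z c
  · filter_upwards [eventually_atInfSector_iff.2 ⟨0, fun z hz _ => hz⟩,
      hl.eventually_ge_atTop R₀] with z hz hR using hshift z hz hR

lemma tendsto_const_div_of_tendsto_norm (hl : Tendsto (‖·‖) l atTop) (c : ℂ) :
    Tendsto (fun z => c / z) l (𝓝 0) := by
  rw [tendsto_zero_iff_norm_tendsto_zero]
  simpa only [norm_div] using tendsto_const_nhds.div_atTop hl

lemma isBigO_norm_sub_rpow (hl : Tendsto (‖·‖) l atTop) (c : ℂ) (γ : ℝ) :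
    (fun z => ‖z - c‖ ^ γ) =O[l] fun z => ‖z‖ ^ γ := by
  have hratio : Tendsto (fun z => (‖z - c‖ / ‖z‖) ^ γ) l (𝓝 1) := by
    have h : Tendsto (fun z => ‖1 - c / z‖) l (𝓝 1) := by
      simpa using ((tendsto_const_div_of_tendsto_norm hl c).const_sub 1).norm
    refine (Real.one_rpow γ ▸ (h.congr' ?_).rpow_const (Or.inl one_ne_zero))
    filter_upwards [hl.eventually_gt_atTop 0] with z hz
    rw [one_sub_div (norm_pos_iff.1 hz), norm_div]
  refine ((hratio.isBigO_one ℝ).mul (isBigO_refl _ _)).congr' ?_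
    (.of_forall fun z => one_mul _)
  filter_upwards [hl.eventually_gt_atTop 0] with z hz
  rw [← Real.mul_rpow (by positivity) hz.le, div_mul_cancel₀ _ hz.ne']

lemma isLittleO_rpow_mul_log_pow {b γ : ℝ} (h : b < γ) (i : ℕ) :
    (fun r : ℝ => r ^ b * Real.log r ^ i) =o[atTop] fun r => r ^ γ := by
  have hlog : (fun r : ℝ => Real.log r ^ i) =o[atTop] fun r => r ^ (γ - b) := by
    simpa only [Real.rpow_natCast] using isLittleO_log_rpow_rpow_atTop (i : ℝ) (sub_pos.2 h)
  refine ((isBigO_refl (fun r : ℝ => r ^ b) atTop).mul_isLittleO hlog).congr' .rfl ?_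
  filter_upwards [eventually_gt_atTop 0] with r hr
  rw [← Real.rpow_add hr, add_sub_cancel]

lemma isBigO_logSector (hl : Tendsto (‖·‖) l atTop) (Ψ : ℝ) :
    logSector Ψ =O[l] fun z => Real.log ‖z‖ := by
  refine IsBigO.of_bound 2 ?_
  filter_upwards [(Real.tendsto_log_atTop.comp hl).eventually_ge_atTop (π + |Ψ|)] with z hz
  have hlog : 0 ≤ Real.log ‖z‖ := (by positivity : (0 : ℝ) ≤ π + |Ψ|).trans hz
  have := norm_logSector_le (Ψ := Ψ) z
  rw [abs_of_nonneg hlog] at this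
  rw [Real.norm_of_nonneg hlog]
  exact this.trans (by simp only [Function.comp_apply] at hz; linarith)

lemma isLittleO_cpowSector_mul_logSector_pow (hl : Tendsto (‖·‖) l atTop) (Ψ : ℝ) {b γ : ℝ}
    (h : b < γ) (i : ℕ) :
    (fun z => cpowSector Ψ z b * logSector Ψ z ^ i) =o[l] fun z => ‖z‖ ^ γ := by
  have hcpow : (fun z => cpowSector Ψ z b) =O[l] fun z => ‖z‖ ^ b := by
    refine IsBigO.of_bound 1 ?_
    filter_upwards [hl.eventually_gt_atTop 0] with z hz
    rw [norm_cpowSector b (norm_pos_iff.1 hz), one_mul, Real.norm_of_nonneg (by positivity)]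
  exact (hcpow.mul ((isBigO_logSector hl Ψ).pow i)).trans_isLittleO
    ((isLittleO_rpow_mul_log_pow h i).comp_tendsto hl)

end Asymptotics

section Expansion

variable {l : Filter ℂ} {Ψ α : ℝ} {m M : ℕ}

/-- The `j`-th block `∑_{k ≤ M} Ω j k e^{(α - j/m) u} u^k` of an expansion, in the variable
`u = log z`. -/
noncomputable def expBlock (α : ℝ) (m M : ℕ) (Ω : ℕ → ℕ → ℂ) (j : ℕ) (u : ℂ) : ℂ :=
  ∑ k ∈ Finset.range (M + 1), Ω j k * exp (((α - (j : ℝ) / (m : ℝ) : ℝ) : ℂ) * u) * u ^ k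

noncomputable def expansionSum (Ψ α : ℝ) (m M : ℕ) (Ω : ℕ → ℕ → ℂ) (N : ℕ) (z : ℂ) : ℂ :=
  ∑ j ∈ Finset.range (N + 1), expBlock α m M Ω j (logSector Ψ z)

def HasExpansion (l : Filter ℂ) (Ψ α : ℝ) (m M : ℕ) (f : ℂ → ℂ) (Ω : ℕ → ℕ → ℂ) : Prop :=
  ∀ N : ℕ, (fun z => f z - expansionSum Ψ α m M Ω N z)
    =o[l] fun z => ‖z‖ ^ (α - (N : ℝ) / (m : ℝ))

lemma expBlock_const_mul (a : ℂ) (Ω : ℕ → ℕ → ℂ) (j : ℕ) (u : ℂ) :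
    expBlock α m M (fun j k => a * Ω j k) j u = a * expBlock α m M Ω j u := by
  simp only [expBlock, Finset.mul_sum, mul_assoc]

lemma expBlock_sum {ι : Type*} (s : Finset ι) (Ω : ι → ℕ → ℕ → ℂ) (j : ℕ) (u : ℂ) :
    expBlock α m M (fun j k => ∑ i ∈ s, Ω i j k) j u = ∑ i ∈ s, expBlock α m M (Ω i) j u := by
  simp only [expBlock, Finset.sum_mul]
  exact Finset.sum_comm

lemma expansionSum_sum {ι : Type*} (s : Finset ι) (Ω : ι → ℕ → ℕ → ℂ) (N : ℕ) (z : ℂ) :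
    expansionSum Ψ α m M (fun j k => ∑ i ∈ s, Ω i j k) N z
      = ∑ i ∈ s, expansionSum Ψ α m M (Ω i) N z := by
  simp only [expansionSum, expBlock_sum]
  exact Finset.sum_comm

lemma expansionSum_congr {Ω Ω' : ℕ → ℕ → ℂ} {N : ℕ} (h : ∀ j ≤ N, ∀ k, Ω j k = Ω' j k)
    (z : ℂ) : expansionSum Ψ α m M Ω N z = expansionSum Ψ α m M Ω' N z :=
  Finset.sum_congr rfl fun j hj => Finset.sum_congr rfl fun k _ => by
    rw [h j (Nat.lt_succ_iff.1 (Finset.mem_range.1 hj))]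

namespace HasExpansion

variable {f g : ℂ → ℂ} {Ω : ℕ → ℕ → ℂ}

lemma congr' (h : HasExpansion l Ψ α m M f Ω) (hfg : f =ᶠ[l] g) :
    HasExpansion l Ψ α m M g Ω :=
  fun N => (h N).congr' (hfg.sub .rfl) .rfl

lemma const_mul (h : HasExpansion l Ψ α m M f Ω) (a : ℂ) :
    HasExpansion l Ψ α m M (fun z => a * f z) (fun j k => a * Ω j k) := by
  intro N
  refine ((h N).const_mul_left a).congr_left fun z => ?_
  simp only [expansionSum, expBlock_const_mul, ← Finset.mul_sum]
  ring

lemma sum {ι : Type*} (s : Finset ι) {f : ι → ℂ → ℂ} {Ω : ι → ℕ → ℕ → ℂ}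
    (h : ∀ i ∈ s, HasExpansion l Ψ α m M (f i) (Ω i)) :
    HasExpansion l Ψ α m M (fun z => ∑ i ∈ s, f i z) (fun j k => ∑ i ∈ s, Ω i j k) := by
  intro N
  refine (IsLittleO.fun_sum fun i hi => h i hi N).congr_left fun z => ?_
  rw [expansionSum_sum, Finset.sum_sub_distrib]

lemma of_isLittleO_sub_sum {g : ℕ → ℂ → ℂ} {Ω : ℕ → ℕ → ℕ → ℂ}
    (hf : ∀ N : ℕ, (fun z => f z - ∑ j ∈ Finset.range (N + 1), g j z)
      =o[l] fun z => ‖z‖ ^ (α - (N : ℝ) / (m : ℝ)))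
    (hg : ∀ j, HasExpansion l Ψ α m M (g j) (Ω j)) (hlt : ∀ j j', j' < j → ∀ k, Ω j j' k = 0) :
    HasExpansion l Ψ α m M f (fun j' k => ∑ j ∈ Finset.range (j' + 1), Ω j j' k) := by
  intro N
  have hsum : ∀ z, expansionSum Ψ α m M (fun j' k => ∑ j ∈ Finset.range (j' + 1), Ω j j' k) N z
      = ∑ j ∈ Finset.range (N + 1), expansionSum Ψ α m M (Ω j) N z := fun z => by
    refine (expansionSum_congr (fun j' hj' k => ?_) z).trans (expansionSum_sum _ _ N z)
    refine Finset.sum_subset (Finset.range_subset_range.2 (by omega)) fun j _ hj => ?_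
    exact hlt j j' (by simpa using hj) k
  refine ((hf N).add (IsLittleO.fun_sum (s := Finset.range (N + 1)) fun j _ => hg j N)).congr_left
    fun z => ?_
  rw [hsum, Finset.sum_sub_distrib]
  ring

lemma isLittleO_comp_sub {l' : Filter ℂ} (h : HasExpansion l Ψ α m M f Ω) {c : ℂ}
    (hc : Tendsto (· - c) l' l) (hl' : Tendsto (‖·‖) l' atTop) (N : ℕ) :
    (fun z => f (z - c) - expansionSum Ψ α m M Ω N (z - c))
      =o[l'] fun z => ‖z‖ ^ (α - (N : ℝ) / (m : ℝ)) :=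
  ((h N).comp_tendsto hc).trans_isBigO (isBigO_norm_sub_rpow hl' c _)

end HasExpansion

end Expansion

section Shift

open scoped Topology

variable {l : Filter ℂ} {Ψ α : ℝ} {m M : ℕ}

/-- Coefficients of `z^{α - j/m} (log z)^i ∑_t a t z^{-t}`: the term `a t` sits at
`(j + t m, i)`. -/
def shiftCoeff (m j i : ℕ) (a : ℕ → ℂ) (j' k : ℕ) : ℂ :=
  if k = i then (if j ≤ j' ∧ m ∣ j' - j then a ((j' - j) / m) else 0) else 0

lemma shiftCoeff_of_lt {j j' : ℕ} (h : j' < j) (i : ℕ) (a : ℕ → ℂ) (k : ℕ) :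
    shiftCoeff m j i a j' k = 0 := by
  simp [shiftCoeff, not_le.2 h]

lemma shiftCoeff_self (j i : ℕ) (a : ℕ → ℂ) (k : ℕ) :
    shiftCoeff m j i a j k = if k = i then a 0 else 0 := by
  simp [shiftCoeff]

lemma sum_range_ite_dvd_sub (hm : 0 < m) (j N : ℕ) (g : ℕ → ℂ) :
    ∑ j' ∈ Finset.range (N + 1), (if j ≤ j' ∧ m ∣ j' - j then g j' else 0)
      = ∑ t ∈ Finset.range (N + 1), if j + t * m ≤ N then g (j + t * m) else 0 := by
  rw [← Finset.sum_filter, ← Finset.sum_filter]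
  refine Finset.sum_nbij' (fun j' => (j' - j) / m) (fun t => j + t * m) ?_ ?_ ?_ ?_ ?_ <;>
    simp only [Finset.mem_filter, Finset.mem_range]
  · rintro j' ⟨hj'N, hjj', t, ht⟩
    rw [ht, Nat.mul_div_cancel_left _ hm]
    have := Nat.le_mul_of_pos_right t hm
    rw [mul_comm] at ht
    omega
  · intro t ht
    exact ⟨by omega, by omega, by simp⟩
  · rintro j' ⟨-, hjj', t, ht⟩
    rw [ht, Nat.mul_div_cancel_left _ hm]
    rw [mul_comm] at ht
    omega
  · intro t _
    simp [Nat.mul_div_cancel _ hm]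
  · rintro j' ⟨-, hjj', t, ht⟩
    rw [ht, Nat.mul_div_cancel_left _ hm]
    rw [mul_comm] at ht
    congr 1
    omega

lemma ofReal_sub_div_add_mul (hm : 0 < m) (j t : ℕ) :
    ((α - ((j + t * m : ℕ) : ℝ) / (m : ℝ) : ℝ) : ℂ) = ((α - (j : ℝ) / (m : ℝ) : ℝ) : ℂ) - t := by
  have : (m : ℝ) ≠ 0 := by positivity
  rw [Nat.cast_add, Nat.cast_mul, add_div, mul_div_cancel_right₀ _ this]
  push_cast
  ring

lemma expansionSum_shiftCoeff (hm : 0 < m) {i : ℕ} (hi : i ≤ M) (j : ℕ) (a : ℕ → ℂ) (N : ℕ)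
    (z : ℂ) :
    expansionSum Ψ α m M (shiftCoeff m j i a) N z
      = ∑ t ∈ Finset.range (N + 1), if j + t * m ≤ N then a t *
          (cpowSector Ψ z (((α - ((j + t * m : ℕ) : ℝ) / (m : ℝ) : ℝ) : ℂ)) * logSector Ψ z ^ i)
        else 0 := by
  have hblock : ∀ j', expBlock α m M (shiftCoeff m j i a) j' (logSector Ψ z)
      = if j ≤ j' ∧ m ∣ j' - j then
          a ((j' - j) / m) * (cpowSector Ψ z (((α - (j' : ℝ) / (m : ℝ) : ℝ) : ℂ)) *
            logSector Ψ z ^ i) else 0 := fun j' => by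
    simp only [expBlock, shiftCoeff, ite_mul, zero_mul]
    rw [Finset.sum_ite_eq' _ _ _, if_pos (Finset.mem_range.2 (Nat.lt_succ_of_le hi))]
    split_ifs <;> simp [cpowSector, mul_assoc]
  simp only [expansionSum, hblock]
  rw [sum_range_ite_dvd_sub hm]
  simp [Nat.mul_div_cancel _ hm]

lemma HasFPowerSeriesAt.isBigO_comp_div_sub_sum {G : ℂ → ℂ} {p : FormalMultilinearSeries ℂ ℂ ℂ}
    (hG : HasFPowerSeriesAt G p 0) (hl : Tendsto (‖·‖) l atTop) (c : ℂ) (T : ℕ) :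
    (fun z => G (c / z) - ∑ t ∈ Finset.range T, p.coeff t * (c / z) ^ t)
      =O[l] fun z => (c / z) ^ T := by
  refine (((hG.isBigO_sub_partialSum_pow T).comp_tendsto
    (tendsto_const_div_of_tendsto_norm hl c)).congr_left fun z => ?_).trans
    (isBigO_of_le _ fun z => by simp [norm_pow])
  simp [FormalMultilinearSeries.partialSum, mul_comm]

lemma cpowSector_mul_sub_expansionSum_shiftCoeff (hm : 0 < m) {i : ℕ} (hi : i ≤ M) (j N : ℕ)
    (q : ℕ → ℂ) (c w : ℂ) {z : ℂ} (hz : z ≠ 0) :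
    cpowSector Ψ z ((α - (j : ℝ) / (m : ℝ) : ℝ) : ℂ) * logSector Ψ z ^ i * w
        - expansionSum Ψ α m M (shiftCoeff m j i fun t => q t * c ^ t) N z
      = ∑ t ∈ Finset.range (N + 1), (if j + t * m ≤ N then 0 else q t * c ^ t *
          (cpowSector Ψ z (((α - ((j + t * m : ℕ) : ℝ) / (m : ℝ) : ℝ) : ℂ)) * logSector Ψ z ^ i))
        + cpowSector Ψ z ((α - (j : ℝ) / (m : ℝ) : ℝ) : ℂ) * logSector Ψ z ^ i
          * (w - ∑ t ∈ Finset.range (N + 1), q t * (c / z) ^ t) := by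
  rw [expansionSum_shiftCoeff hm hi, mul_sub, Finset.mul_sum, ← sub_add_sub_cancel,
    ← Finset.sum_sub_distrib, add_comm]
  congr 1
  refine Finset.sum_congr rfl fun t _ => ?_
  have h := cpowSector_mul_div_pow (Ψ := Ψ) hz (((α - (j : ℝ) / (m : ℝ) : ℝ) : ℂ)) c t
  rw [ofReal_sub_div_add_mul hm]
  split_ifs <;> linear_combination (q t * logSector Ψ z ^ i) * h

lemma hasExpansion_cpowSector_mul_comp_div (hl : Tendsto (‖·‖) l atTop) (hm : 0 < m)
    {G : ℂ → ℂ} {p : FormalMultilinearSeries ℂ ℂ ℂ} (hG : HasFPowerSeriesAt G p 0) (c : ℂ)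
    (j : ℕ) {i : ℕ} (hi : i ≤ M) :
    HasExpansion l Ψ α m M
      (fun z => cpowSector Ψ z ((α - (j : ℝ) / (m : ℝ) : ℝ) : ℂ) * logSector Ψ z ^ i * G (c / z))
      (shiftCoeff m j i fun t => p.coeff t * c ^ t) := by
  intro N
  have hm' : (0 : ℝ) < m := by exact_mod_cast hm
  have hterms : (fun z => ∑ t ∈ Finset.range (N + 1), if j + t * m ≤ N then 0 else
      p.coeff t * c ^ t * (cpowSector Ψ z (((α - ((j + t * m : ℕ) : ℝ) / (m : ℝ) : ℝ) : ℂ)) *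
        logSector Ψ z ^ i)) =o[l] fun z => ‖z‖ ^ (α - (N : ℝ) / (m : ℝ)) := by
    refine IsLittleO.fun_sum fun t _ => ?_
    by_cases h : j + t * m ≤ N
    · simpa only [h, if_true] using isLittleO_zero _ _
    · simp only [h, if_false]
      refine (isLittleO_cpowSector_mul_logSector_pow hl Ψ ?_ i).const_mul_left _
      have : (N : ℝ) < ((j + t * m : ℕ) : ℝ) := by exact_mod_cast not_le.1 h
      linarith [div_lt_div_of_pos_right this hm']
  have hexp : α - (j : ℝ) / m - ((N + 1 : ℕ) : ℝ) < α - (N : ℝ) / (m : ℝ) := by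
    have h₁ : (N : ℝ) / m ≤ N := div_le_self (Nat.cast_nonneg N) (by exact_mod_cast hm)
    have h₂ : 0 ≤ (j : ℝ) / m := by positivity
    push_cast
    linarith
  have hrem : (fun z => cpowSector Ψ z ((α - (j : ℝ) / (m : ℝ) : ℝ) : ℂ) * logSector Ψ z ^ i
      * (c / z) ^ (N + 1)) =o[l] fun z => ‖z‖ ^ (α - (N : ℝ) / (m : ℝ)) := by
    refine ((isLittleO_cpowSector_mul_logSector_pow hl Ψ hexp i).const_mul_left
      (c ^ (N + 1))).congr' ?_ .rfl
    filter_upwards [hl.eventually_gt_atTop 0] with z hz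
    rw [mul_right_comm, cpowSector_mul_div_pow (norm_pos_iff.1 hz)]
    push_cast
    ring_nf
  refine (hterms.add (((isBigO_refl _ l).mul (hG.isBigO_comp_div_sub_sum hl c (N + 1))
    ).trans_isLittleO hrem)).congr' ?_ .rfl
  filter_upwards [hl.eventually_gt_atTop 0] with z hz
  exact (cpowSector_mul_sub_expansionSum_shiftCoeff hm hi j N _ c _ (norm_pos_iff.1 hz)).symm

noncomputable def cpowLogOneSub (β : ℂ) (n : ℕ) (w : ℂ) : ℂ :=
  exp (β * log (1 - w)) * log (1 - w) ^ n

lemma analyticAt_cpowLogOneSub (β : ℂ) (n : ℕ) : AnalyticAt ℂ (cpowLogOneSub β n) 0 := by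
  have hlog : AnalyticAt ℂ (fun w : ℂ => log (1 - w)) 0 :=
    (analyticAt_clog (by simp)).comp (analyticAt_const.sub analyticAt_id)
  exact ((analyticAt_const.mul hlog).cexp).mul (hlog.pow n)

lemma cpowLogOneSub_zero (β : ℂ) (n : ℕ) : cpowLogOneSub β n 0 = if n = 0 then 1 else 0 := by
  cases n <;> simp [cpowLogOneSub]

lemma expBlock_add_log_one_sub (d : ℕ → ℕ → ℂ) (j : ℕ) (θ w : ℂ) :
    expBlock α m M d j (θ + log (1 - w)) = ∑ k ∈ Finset.range (M + 1), ∑ i ∈ Finset.range (k + 1),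
      d j k * (k.choose i : ℂ) * (exp (((α - (j : ℝ) / (m : ℝ) : ℝ) : ℂ) * θ) * θ ^ i *
        cpowLogOneSub ((α - (j : ℝ) / (m : ℝ) : ℝ) : ℂ) (k - i) w) := by
  simp only [expBlock, cpowLogOneSub, add_pow, mul_add, Complex.exp_add, Finset.mul_sum]
  exact Finset.sum_congr rfl fun k _ => Finset.sum_congr rfl fun i _ => by ring

lemma exists_hasExpansion_expBlock_add_log (hl : Tendsto (‖·‖) l atTop) (hm : 0 < m)
    (d : ℕ → ℕ → ℂ) (c : ℂ) (j : ℕ) :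
    ∃ Ω : ℕ → ℕ → ℂ,
      HasExpansion l Ψ α m M (fun z => expBlock α m M d j (logSector Ψ z + log (1 - c / z))) Ω ∧
      (∀ j' < j, ∀ k, Ω j' k = 0) ∧ ∀ k ≤ M, Ω j k = d j k := by
  choose p hp using fun n => analyticAt_cpowLogOneSub ((α - (j : ℝ) / (m : ℝ) : ℝ) : ℂ) n
  refine ⟨fun j' k' => ∑ k ∈ Finset.range (M + 1), ∑ i ∈ Finset.range (k + 1),
    d j k * (k.choose i : ℂ) * shiftCoeff m j i (fun t => (p (k - i)).coeff t * c ^ t) j' k',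
    ?_, fun j' hj' k' => by simp [shiftCoeff_of_lt hj'], fun k' hk' => ?_⟩
  · refine (HasExpansion.sum _ fun k hk => HasExpansion.sum _ fun i hi =>
      (hasExpansion_cpowSector_mul_comp_div hl hm (hp (k - i)) c j ?_).const_mul _).congr'
      (.of_forall fun z => (expBlock_add_log_one_sub d j _ _).symm)
    simp only [Finset.mem_range] at hk hi
    omega
  · have h0 : ∀ n, (p n).coeff 0 = if n = 0 then 1 else 0 := fun n => by
      rw [← cpowLogOneSub_zero]; exact (hp n).coeff_zero 1
    simp only [shiftCoeff_self, h0]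
    rw [Finset.sum_eq_single_of_mem k' (Finset.mem_range.2 (Nat.lt_succ_of_le hk'))
      fun k _ hk => Finset.sum_eq_zero fun i hi => ?_]
    · rw [Finset.sum_eq_single_of_mem k' (Finset.self_mem_range_succ k')
        fun i _ hi => by simp [Ne.symm hi]]
      simp
    · rcases eq_or_ne k' i with rfl | h
      · simp only [Finset.mem_range] at hi
        simp [show k - k' ≠ 0 by omega]
      · simp [h]

end Shift

section Branch

open scoped Topology

lemma eventually_logSector_sub_eq {Ψ ε' : ℝ} (hε' : ε' < π) (c : ℂ) :
    ∀ᶠ z in atInfSector Ψ ε', logSector Ψ (z - c) = logSector Ψ z + log (1 - c / z) := by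
  have h1 : Tendsto (fun z => 1 - c / z) (atInfSector Ψ ε') (𝓝 1) := by
    simpa using (tendsto_const_div_of_tendsto_norm (tendsto_norm_atInfSector Ψ ε') c).const_sub 1
  have harg : Tendsto (fun z => |arg (1 - c / z)|) (atInfSector Ψ ε') (𝓝 0) := by
    simpa using ((Complex.continuousAt_arg (by simp)).tendsto.comp h1).abs
  filter_upwards [eventually_atInfSector_iff.2 ⟨0, fun z hz _ => hz⟩,
    harg.eventually (gt_mem_nhds (sub_pos.2 hε')), h1.eventually_ne one_ne_zero]
    with z hz harg hne
  rw [sector_eq_image_exp] at hz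
  obtain ⟨u, ⟨hu₁, hu₂⟩, rfl⟩ := hz
  have hzc : exp u - c = exp (u + log (1 - c / exp u)) := by
    rw [Complex.exp_add, Complex.exp_log hne, mul_sub, mul_one,
      mul_div_cancel₀ _ (Complex.exp_ne_zero u)]
  have harg' := abs_lt.1 harg
  rw [hzc, logSector_exp, logSector_exp] <;>
    (try simp only [Complex.add_im, Complex.log_im]) <;> linarith

lemma eventually_exists_logSector_sub_eq {l : Filter ℂ} (hl : Tendsto (‖·‖) l atTop) (Ψ : ℝ)
    (c : ℂ) : ∀ᶠ z in l, ∃ n : ℤ,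
      logSector Ψ (z - c) = logSector Ψ z + log (1 - c / z) + n * (2 * π * I) := by
  filter_upwards [hl.eventually_gt_atTop ‖c‖] with z hz
  have hz0 : z ≠ 0 := norm_pos_iff.1 ((norm_nonneg c).trans_lt hz)
  have hzc : z - c ≠ 0 := sub_ne_zero.2 fun h => by simp [h] at hz
  have hne : 1 - c / z ≠ 0 := by
    rw [one_sub_div hz0]
    exact div_ne_zero hzc hz0
  refine Complex.exp_eq_exp_iff_exists_int.1 ?_
  rw [exp_logSector hzc, Complex.exp_add, exp_logSector hz0, Complex.exp_log hne, one_sub_div hz0,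
    mul_div_cancel₀ _ hz0]

end Branch

section Periodicity

open scoped Topology Polynomial

lemma Polynomial.eq_zero_of_tendsto_eval_ofReal {p : ℂ[X]}
    (h : Tendsto (fun x : ℝ => p.eval (x : ℂ)) atTop (𝓝 0)) : p = 0 := by
  by_cases hdeg : 0 < p.degree
  · have hnorm : Tendsto (fun x : ℝ => ‖p.eval (x : ℂ)‖) atTop atTop :=
      p.tendsto_norm_atTop hdeg (by simpa using tendsto_abs_atTop_atTop)
    exact absurd h.norm (by simpa using not_tendsto_nhds_of_tendsto_atTop hnorm 0)
  · rw [Polynomial.eq_C_of_degree_le_zero (not_lt.1 hdeg)] at h ⊢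
    simpa using h

lemma Polynomial.eq_zero_of_forall_isLittleO_sum_exp_mul {b : ℕ → ℝ} {p : ℕ → ℂ[X]}
    (h : ∀ J, (fun x : ℝ => ∑ j ∈ Finset.range (J + 1),
        (Real.exp (b j * x) : ℂ) * (p j).eval (x : ℂ))
      =o[atTop] fun x => Real.exp (b J * x)) (J : ℕ) : p J = 0 := by
  induction J using Nat.strong_induction_on with
  | _ J ih =>
  have hsum : ∀ x : ℝ, ∑ j ∈ Finset.range (J + 1), (Real.exp (b j * x) : ℂ) * (p j).eval (x : ℂ)
      = Real.exp (b J * x) * (p J).eval (x : ℂ) := fun x => by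
    rw [Finset.sum_range_succ, Finset.sum_eq_zero fun j hj => by
      rw [ih j (Finset.mem_range.1 hj), Polynomial.eval_zero, mul_zero], zero_add]
  refine Polynomial.eq_zero_of_tendsto_eval_ofReal ?_
  rw [← isLittleO_one_iff ℝ, isLittleO_iff]
  intro ε hε
  filter_upwards [isLittleO_iff.1 ((h J).congr_left hsum) hε] with x hx
  rw [norm_mul, Complex.norm_real, Real.norm_of_nonneg (Real.exp_pos _).le, mul_comm ε] at hx
  rw [norm_one, mul_one]
  exact le_of_mul_le_mul_left hx (Real.exp_pos _)

variable {α : ℝ} {m M : ℕ}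

noncomputable def blockPoly (α : ℝ) (m M : ℕ) (d : ℕ → ℕ → ℂ) (j : ℕ) (φ : ℂ) : ℂ[X] :=
  Polynomial.C (exp (((α - (j : ℝ) / (m : ℝ) : ℝ) : ℂ) * φ)) *
    ∑ k ∈ Finset.range (M + 1), Polynomial.C (d j k) * (Polynomial.X + Polynomial.C φ) ^ k

lemma expBlock_add (d : ℕ → ℕ → ℂ) (j : ℕ) (u φ : ℂ) :
    expBlock α m M d j (u + φ)
      = exp (((α - (j : ℝ) / (m : ℝ) : ℝ) : ℂ) * u) * (blockPoly α m M d j φ).eval u := by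
  simp only [expBlock, blockPoly, Polynomial.eval_mul, Polynomial.eval_C, Polynomial.eval_finsetSum,
    Polynomial.eval_pow, Polynomial.eval_add, Polynomial.eval_X, Finset.mul_sum, mul_add,
    Complex.exp_add]
  exact Finset.sum_congr rfl fun k _ => by ring

lemma continuous_expBlock (d : ℕ → ℕ → ℂ) (j : ℕ) : Continuous (expBlock α m M d j) :=
  continuous_finsetSum _ fun k _ => by fun_prop

/-- Continuity of `L` across the ray `arg = a` bounds the jump of `F` across it. -/
lemma norm_sub_le_of_continuousAt_exp {L F : ℂ → ℂ} {x a B : ℝ}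
    (hL : ContinuousAt L (exp (x + a * I))) (hF : Continuous F)
    (hB : ∀ t ∈ Ioc a (a + 2 * π), ‖L (exp (x + t * I)) - F (x + t * I)‖ ≤ B) :
    ‖F (x + ↑(a + 2 * π) * I) - F (x + a * I)‖ ≤ 2 * B := by
  have hu : Continuous fun t : ℝ => (x : ℂ) + t * I := by fun_prop
  have hexp : ContinuousAt (fun t : ℝ => exp ((x : ℂ) + t * I)) a := by fun_prop
  have hcont : ContinuousAt (fun t : ℝ => ‖L (exp (x + t * I)) - F (x + t * I)‖) a :=
    ((hL.comp_of_eq hexp rfl).sub (hF.comp hu).continuousAt).norm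
  have hleft : ‖L (exp (x + a * I)) - F (x + a * I)‖ ≤ B :=
    le_of_tendsto (hcont.tendsto.mono_left (nhdsWithin_le_nhds (s := Ioi a)))
      (mem_of_superset (Ioc_mem_nhdsGT (by linarith [Real.pi_pos])) hB)
  have hright := hB (a + 2 * π) ⟨by linarith [Real.pi_pos], le_rfl⟩
  have hexp : exp (x + ↑(a + 2 * π) * I) = exp (x + a * I) := by
    rw [← Complex.exp_periodic (x + a * I)]
    push_cast
    ring_nf
  rw [hexp] at hright
  calc ‖F (x + ↑(a + 2 * π) * I) - F (x + a * I)‖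
      = ‖(L (exp (x + a * I)) - F (x + a * I))
          - (L (exp (x + a * I)) - F (x + ↑(a + 2 * π) * I))‖ := by ring_nf
    _ ≤ B + B := (norm_sub_le _ _).trans (add_le_add hleft hright)
    _ = 2 * B := by ring

variable {Ψ ε : ℝ} {L : ℂ → ℂ} {d : ℕ → ℕ → ℂ}

lemma isLittleO_sum_expBlock_jump (hε : π < ε) (hL : ContinuousOn L (sector Ψ ε))
    (hasymp : HasExpansion (atInfSector Ψ ε) Ψ α m M L d) (J : ℕ) :
    (fun x : ℝ => ∑ j ∈ Finset.range (J + 1),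
      (expBlock α m M d j (x + ↑(Ψ + π) * I) - expBlock α m M d j (x + ↑(Ψ - π) * I)))
      =o[atTop] fun x => Real.exp ((α - (J : ℝ) / (m : ℝ)) * x) := by
  set F : ℂ → ℂ := fun u => ∑ j ∈ Finset.range (J + 1), expBlock α m M d j u
  have hF : Continuous F := continuous_finsetSum _ fun j _ => continuous_expBlock d j
  rw [isLittleO_iff]
  intro C hC
  obtain ⟨R, hR⟩ := eventually_atInfSector_iff.1 (isLittleO_iff.1 (hasymp J) (half_pos hC))
  filter_upwards [Real.tendsto_exp_atTop.eventually_ge_atTop R] with x hx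
  have hbound : ∀ t ∈ Ioc (Ψ - π) (Ψ - π + 2 * π), ‖L (exp (x + t * I)) - F (x + t * I)‖
      ≤ C / 2 * Real.exp ((α - (J : ℝ) / (m : ℝ)) * x) := by
    rintro t ⟨ht₁, ht₂⟩
    have hnorm : ‖exp (x + t * I)‖ = Real.exp x := by simp [Complex.norm_exp]
    have h := hR _ (exp_mem_sector (by simp; constructor <;> linarith)) (hnorm ▸ hx)
    rwa [expansionSum, logSector_exp (by simp; linarith) (by simp; linarith), hnorm,
      Real.norm_of_nonneg (by positivity), ← Real.exp_mul, mul_comm x] at h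
  have hjump := norm_sub_le_of_continuousAt_exp
    (hL.continuousAt (isOpen_sector.mem_nhds
      (exp_mem_sector (by simp; constructor <;> linarith [Real.pi_pos]))))
    hF hbound
  rw [show Ψ - π + 2 * π = Ψ + π by ring] at hjump
  rw [Finset.sum_sub_distrib, Real.norm_of_nonneg (by positivity)]
  exact hjump.trans_eq (by ring)

/-- On a sector of opening more than `2π`, the continuity of `L` across the cut of `logSector`
forces every block of its expansion to be `2πi`-periodic in `log z`. -/
lemma periodic_expBlock (hε : π < ε) (hL : ContinuousOn L (sector Ψ ε))
    (hasymp : HasExpansion (atInfSector Ψ ε) Ψ α m M L d) (j : ℕ) :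
    Function.Periodic (expBlock α m M d j) (2 * π * I) := by
  have hzero : ∀ J, blockPoly α m M d J (↑(Ψ + π) * I) - blockPoly α m M d J (↑(Ψ - π) * I) = 0 :=
    Polynomial.eq_zero_of_forall_isLittleO_sum_exp_mul (b := fun j => α - (j : ℝ) / (m : ℝ))
      fun J => (isLittleO_sum_expBlock_jump hε hL hasymp J).congr_left fun x =>
        Finset.sum_congr rfl fun j _ => by
          rw [expBlock_add, expBlock_add, Polynomial.eval_sub, Complex.ofReal_exp]
          push_cast
          ring
  intro u
  have h := congrArg (Polynomial.eval (u - ↑(Ψ - π) * I)) (hzero j)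
  rw [Polynomial.eval_sub, Polynomial.eval_zero, sub_eq_zero] at h
  calc expBlock α m M d j (u + 2 * π * I)
      = expBlock α m M d j (u - ↑(Ψ - π) * I + ↑(Ψ + π) * I) := by congr 1; push_cast; ring
    _ = expBlock α m M d j (u - ↑(Ψ - π) * I + ↑(Ψ - π) * I) := by
      rw [expBlock_add, expBlock_add, h]
    _ = expBlock α m M d j u := by rw [sub_add_cancel]

lemma eventually_expBlock_logSector_sub {ε' : ℝ} (hε'ε : ε' < ε)
    (hL : ContinuousOn L (sector Ψ ε)) (hasymp : HasExpansion (atInfSector Ψ ε) Ψ α m M L d)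
    (c : ℂ) : ∀ᶠ z in atInfSector Ψ ε', ∀ j, expBlock α m M d j (logSector Ψ (z - c))
      = expBlock α m M d j (logSector Ψ z + log (1 - c / z)) := by
  rcases lt_or_ge ε' π with hε' | hε'
  · filter_upwards [eventually_logSector_sub_eq hε' c] with z hz j
    rw [hz]
  · filter_upwards [eventually_exists_logSector_sub_eq (tendsto_norm_atInfSector Ψ ε') Ψ c]
      with z ⟨n, hn⟩ j
    rw [hn, (periodic_expBlock (hε'.trans_lt hε'ε) hL hasymp j).int_mul n]

end Periodicity

theorem shifted_asymptotic_expansion_general (α : ℝ) (m M : ℕ) (Ψ ε : ℝ) (L : ℂ → ℂ)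
    (d : ℕ → ℕ → ℂ) (c : ℂ) (ε' R₀ : ℝ)
    (hm : 1 ≤ m)
    (hL : DifferentiableOn ℂ L (sector Ψ ε))
    (hasymp : ∀ N : ℕ, (fun z : ℂ => L z - ∑ j ∈ Finset.range (N + 1),
        ∑ k ∈ Finset.range (M + 1),
          d j k * cpowSector Ψ z ((α - (j : ℝ) / (m : ℝ) : ℝ) : ℂ) * logSector Ψ z ^ k)
      =o[atInfSector Ψ ε] fun z : ℂ => ‖z‖ ^ (α - (N : ℝ) / (m : ℝ)))
    (hε'ε : ε' < ε)
    (hshift : ∀ z ∈ sector Ψ ε', R₀ ≤ ‖z‖ → z - c ∈ sector Ψ ε) :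
    ∃ Ω : ℕ → ℕ → ℂ,
      (∀ N : ℕ, (fun z : ℂ => L (z - c) - ∑ j ∈ Finset.range (N + 1),
          ∑ k ∈ Finset.range (M + 1),
            Ω j k * cpowSector Ψ z ((α - (j : ℝ) / (m : ℝ) : ℝ) : ℂ) * logSector Ψ z ^ k)
        =o[atInfSector Ψ ε'] fun z : ℂ => ‖z‖ ^ (α - (N : ℝ) / (m : ℝ))) ∧
      ∀ k, k ≤ M → Ω 0 k = d 0 k := by
  have hexp : HasExpansion (atInfSector Ψ ε) Ψ α m M L d := hasymp
  have hl := tendsto_norm_atInfSector Ψ ε'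
  choose Ω hΩ hΩ_lt hΩ_self using fun j =>
    exists_hasExpansion_expBlock_add_log (Ψ := Ψ) (M := M) hl hm d c j
  have hbranch := eventually_expBlock_logSector_sub hε'ε hL.continuousOn hexp c
  refine ⟨fun j k => ∑ j' ∈ Finset.range (j + 1), Ω j' j k, ?_,
    fun k hk => by simp [hΩ_self 0 k hk]⟩
  exact HasExpansion.of_isLittleO_sub_sum
    (fun N => hexp.isLittleO_comp_sub (tendsto_sub_atInfSector hshift) hl N)
    (fun j => (hΩ j).congr' (hbranch.mono fun z hz => (hz j).symm)) hΩ_lt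

/-- **Asymptotic expansion of a shifted characteristic-function logarithm** (Theorem 4.2).
If `L` admits, on the sector `S(Ψ, ε)`, an asymptotic expansion to all orders with exponents
`α − j/m` and powers of `log z` up to `M`, then `z ↦ L(z − c)` admits, on the smaller sector
`S(Ψ, ε′)`, an expansion of exactly the same form with coefficients `Ω`, and the leading
coefficients agree: `Ω 0 k = d 0 k` for all `k ≤ M`. -/
theorem shifted_asymptotic_expansion (α : ℝ) (m M : ℕ) (Ψ ε : ℝ) (L : ℂ → ℂ)
    (d : ℕ → ℕ → ℂ) (c : ℂ) (ε' R₀ : ℝ)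
    (hm : 1 ≤ m) (hΨ : Ψ ∈ Set.Ico (-Real.pi) Real.pi) (hε : 0 < ε)
    (hL : DifferentiableOn ℂ L (sector Ψ ε))
    (hasymp : ∀ N : ℕ, (fun z : ℂ => L z - ∑ j ∈ Finset.range (N + 1),
        ∑ k ∈ Finset.range (M + 1),
          d j k * cpowSector Ψ z ((α - (j : ℝ) / (m : ℝ) : ℝ) : ℂ) * logSector Ψ z ^ k)
      =o[atInfSector Ψ ε] fun z : ℂ => ‖z‖ ^ (α - (N : ℝ) / (m : ℝ)))
    (hε' : 0 < ε') (hε'ε : ε' < ε) (hR₀ : 0 < R₀)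
    (hshift : ∀ z ∈ sector Ψ ε', R₀ ≤ ‖z‖ → z - c ∈ sector Ψ ε) :
    ∃ Ω : ℕ → ℕ → ℂ,
      (∀ N : ℕ, (fun z : ℂ => L (z - c) - ∑ j ∈ Finset.range (N + 1),
          ∑ k ∈ Finset.range (M + 1),
            Ω j k * cpowSector Ψ z ((α - (j : ℝ) / (m : ℝ) : ℝ) : ℂ) * logSector Ψ z ^ k)
        =o[atInfSector Ψ ε'] fun z : ℂ => ‖z‖ ^ (α - (N : ℝ) / (m : ℝ))) ∧
      ∀ k, k ≤ M → Ω 0 k = d 0 k :=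
  shifted_asymptotic_expansion_general α m M Ψ ε L d c ε' R₀ hm hL hasymp hε'ε hshift
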